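/- arXiv:2406.06421 — 3 statements merged into one kernel-verified Lean document; each statement's English description precedes it below -/
import Mathlib

section
/- Let k > 2 be a fixed integer. For all sufficiently large d, the equation x = f_d(x) on [0,1] has exactly three solutions 0 < γ_d < α_d < β_d < 1, where f_d = g_d ∘ g_d, g_d(x) = 1/(1 + (d−1)x^{k−1}), and α_d is the unique fixed point of g_d in (0,1). Moreover γ_d = g_d(β_d). -/
/-- `g_d(x) = 1/(1 + (d-1)x^(k-1))`. -/
noncomputable def gd (d k : ℕ) (x : ℝ) : ℝ := 1 / (1 + ((d : ℝ) - 1) * x ^ (k - 1))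

/-- `f_d = g_d ∘ g_d`. -/
noncomputable def fd (d k : ℕ) (x : ℝ) : ℝ := gd d k (gd d k x)

/-!
Write `k = n + 2` and `c = d - 1`. For `y > 0` and `x = g y`, subtracting
`x (1 + c y^(n+1)) = 1` from `y (1 + c x^(n+1))` and factoring out `y - x` gives
`y (1 + c x^(n+1)) - 1 = (y - x) (1 - ψ y)`, where
`ψ y = cycleFactor d n y = c · (g y · y^n) · ∑_{j<n} (g y / y)^j`;
so off the fixed point `α` of `g`, `y` lies on a 2-cycle of `g` iff `ψ y = 1`.

For large `d` the fixed point `α` is below `1/(n+1)`, i.e. `c α^(n+1) > n`. Then on `[α, ∞)` both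
`g y · y^n = y^n / (1 + c y^(n+1))` and `g y / y` decrease, so `ψ` is strictly decreasing there.
As `ψ α = n c α^(n+1) > 1 > 1 - d^(-n) = ψ 1`, `ψ` takes the value `1` at exactly one `β ∈ (α, 1)`.
A fixed point of `f` below `α` is sent by `g` to one above `α`, so it is `g β`.
-/

open Finset Set

lemma mul_pow_sub_pow_le {a b : ℝ} (ha : 0 ≤ a) (hab : a ≤ b) (n : ℕ) :
    b * (b ^ n - a ^ n) ≤ n * b ^ n * (b - a) := by
  induction n with
  | zero => simp
  | succ n ih =>
    have hb : 0 ≤ b := ha.trans hab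
    rw [pow_succ, pow_succ]
    push_cast
    nlinarith [mul_le_mul_of_nonneg_left ih hb,
      mul_le_mul_of_nonneg_right (pow_le_pow_left₀ ha hab n) (mul_nonneg hb (sub_nonneg.2 hab))]

section
variable {d k n : ℕ} {x y : ℝ}

lemma cast_sub_one_pos (hd : 2 ≤ d) : (0 : ℝ) < (d : ℝ) - 1 := by
  have : (2 : ℝ) ≤ d := by exact_mod_cast hd
  linarith

lemma gd_succ (d n : ℕ) (x : ℝ) : gd d (n + 1) x = 1 / (1 + ((d : ℝ) - 1) * x ^ n) := rfl

lemma gd_denom_pos (hd : 1 ≤ d) (hx : 0 ≤ x) : 0 < 1 + ((d : ℝ) - 1) * x ^ n := by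
  have : (1 : ℝ) ≤ d := by exact_mod_cast hd
  positivity

lemma gd_pos (hd : 1 ≤ d) (hx : 0 ≤ x) : 0 < gd d k x := one_div_pos.2 (gd_denom_pos hd hx)

lemma gd_eq_iff (hd : 1 ≤ d) (hx : 0 ≤ x) :
    gd d (n + 1) x = y ↔ y * (1 + ((d : ℝ) - 1) * x ^ n) = 1 := by
  rw [gd_succ, div_eq_iff (gd_denom_pos hd hx).ne', eq_comm]

lemma gd_strictAntiOn (hd : 2 ≤ d) (hn : n ≠ 0) : StrictAntiOn (gd d (n + 1)) (Ici 0) := by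
  intro a ha b _ hab
  have hc := cast_sub_one_pos hd
  rw [gd_succ, gd_succ]
  apply one_div_lt_one_div_of_lt (gd_denom_pos (by omega) ha)
  gcongr

lemma gd_continuousOn (hd : 1 ≤ d) : ContinuousOn (gd d k) (Ici 0) :=
  continuousOn_const.div (by fun_prop) fun _ hx => (gd_denom_pos hd hx).ne'

lemma gd_one (d k : ℕ) : gd d k 1 = 1 / d := by simp [gd]

lemma gd_lt_of_gd_eq_self {α : ℝ} (hd : 2 ≤ d) (hn : n ≠ 0) (hα : 0 ≤ α)
    (hfix : gd d (n + 1) α = α) (hy : α < y) : gd d (n + 1) y < α :=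
  hfix ▸ gd_strictAntiOn hd hn hα (hα.trans hy.le) hy

noncomputable def cycleFactor (d n : ℕ) (y : ℝ) : ℝ :=
  ((d : ℝ) - 1) * (gd d (n + 2) y * y ^ n) * ∑ j ∈ range n, (gd d (n + 2) y / y) ^ j

lemma mul_one_add_gd_pow_sub_one (hd : 1 ≤ d) (hy : 0 < y) :
    y * (1 + ((d : ℝ) - 1) * gd d (n + 2) y ^ (n + 1)) - 1
      = (y - gd d (n + 2) y) * (1 - cycleFactor d n y) := by
  set x := gd d (n + 2) y with hx
  have hxy : x * (1 + ((d : ℝ) - 1) * y ^ (n + 1)) = 1 := (gd_eq_iff hd hy.le).1 hx.symm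
  have hgeom : (y - x) * ∑ j ∈ range n, (x / y) ^ j = y * (1 - (x / y) ^ n) := by
    rw [← geom_sum_mul_neg]
    field_simp
  have hpow : y ^ n * (x / y) ^ n = x ^ n := by
    rw [div_pow, mul_div_cancel₀ _ (pow_ne_zero n hy.ne')]
  rw [cycleFactor, ← hx]
  linear_combination hxy + ((d : ℝ) - 1) * x * y ^ n * hgeom - ((d : ℝ) - 1) * x * y * hpow

lemma fd_eq_self_iff_cycleFactor_eq_one (hd : 1 ≤ d) (hy : 0 < y)
    (hne : gd d (n + 2) y ≠ y) : fd d (n + 2) y = y ↔ cycleFactor d n y = 1 := by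
  rw [fd, gd_eq_iff hd (gd_pos hd hy.le).le, ← sub_eq_zero, mul_one_add_gd_pow_sub_one hd hy,
    mul_eq_zero, sub_eq_zero, sub_eq_zero, eq_comm (b := cycleFactor d n y)]
  exact or_iff_right (Ne.symm hne)

lemma cycleFactor_of_gd_eq_self (hy : y ≠ 0) (hfix : gd d (n + 2) y = y) :
    cycleFactor d n y = n * (((d : ℝ) - 1) * y ^ (n + 1)) := by
  rw [cycleFactor, hfix, div_self hy]
  simp only [one_pow, sum_const, card_range, nsmul_eq_mul, mul_one]
  ring

lemma cycleFactor_one (hd : 1 ≤ d) : cycleFactor d n 1 = 1 - (1 / (d : ℝ)) ^ n := by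
  have hd0 : (d : ℝ) ≠ 0 := by positivity
  rw [cycleFactor, gd_one, ← geom_sum_mul_neg]
  field_simp
  ring

lemma strictAntiOn_gd_mul_pow {a : ℝ} (hd : 2 ≤ d) (ha : 0 < a)
    (hna : (n : ℝ) ≤ ((d : ℝ) - 1) * a ^ (n + 1)) :
    StrictAntiOn (fun y => gd d (n + 2) y * y ^ n) (Ici a) := by
  intro y₁ hy₁ y₂ _ h₁₂
  have hc := cast_sub_one_pos hd
  have hy₁0 : 0 < y₁ := ha.trans_le hy₁
  have hy₂0 : 0 < y₂ := hy₁0.trans h₁₂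
  have hsub : 0 < y₂ - y₁ := sub_pos.2 h₁₂
  have key : y₂ * (y₂ ^ n - y₁ ^ n) < ((d : ℝ) - 1) * y₁ ^ n * y₂ ^ (n + 1) * (y₂ - y₁) :=
    calc y₂ * (y₂ ^ n - y₁ ^ n) ≤ n * y₂ ^ n * (y₂ - y₁) := mul_pow_sub_pow_le hy₁0.le h₁₂.le n
      _ ≤ ((d : ℝ) - 1) * a ^ (n + 1) * y₂ ^ n * (y₂ - y₁) := by gcongr
      _ ≤ ((d : ℝ) - 1) * y₁ ^ (n + 1) * y₂ ^ n * (y₂ - y₁) := by gcongr; exact hy₁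
      _ < ((d : ℝ) - 1) * y₁ ^ n * y₂ ^ (n + 1) * (y₂ - y₁) := by
        have hP : 0 < ((d : ℝ) - 1) * y₁ ^ n * y₂ ^ n * (y₂ - y₁) := by positivity
        rw [pow_succ, pow_succ]
        nlinarith
  simp only [gd_succ, one_div_mul_eq_div]
  rw [div_lt_div_iff₀ (gd_denom_pos (by omega) hy₂0.le) (gd_denom_pos (by omega) hy₁0.le)]
  refine lt_of_mul_lt_mul_left ?_ hy₂0.le
  linear_combination key

lemma cycleFactor_strictAntiOn {a : ℝ} (hd : 2 ≤ d) (hn : n ≠ 0) (ha : 0 < a)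
    (hna : (n : ℝ) ≤ ((d : ℝ) - 1) * a ^ (n + 1)) :
    StrictAntiOn (cycleFactor d n) (Ici a) := by
  intro y₁ hy₁ y₂ hy₂ h₁₂
  have hy₁0 : 0 < y₁ := ha.trans_le hy₁
  have hy₂0 : 0 < y₂ := hy₁0.trans h₁₂
  have hc := cast_sub_one_pos hd
  have hratio : gd d (n + 2) y₂ / y₂ ≤ gd d (n + 2) y₁ / y₁ :=
    div_le_div₀ (gd_pos (by omega) hy₁0.le).le
      (gd_strictAntiOn hd (by omega) hy₁0.le hy₂0.le h₁₂).le hy₁0 h₁₂.le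
  have hsum_le : ∑ j ∈ range n, (gd d (n + 2) y₂ / y₂) ^ j
      ≤ ∑ j ∈ range n, (gd d (n + 2) y₁ / y₁) ^ j :=
    sum_le_sum fun j _ => pow_le_pow_left₀ (div_pos (gd_pos (by omega) hy₂0.le) hy₂0).le hratio j
  have hsum_pos : 0 < ∑ j ∈ range n, (gd d (n + 2) y₂ / y₂) ^ j :=
    sum_pos (fun j _ => pow_pos (div_pos (gd_pos (by omega) hy₂0.le) hy₂0) j)
      (nonempty_range_iff.2 hn)
  rw [cycleFactor, cycleFactor, mul_assoc, mul_assoc ((d : ℝ) - 1)]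
  exact mul_lt_mul_of_pos_left (mul_lt_mul (strictAntiOn_gd_mul_pow hd ha hna hy₁ hy₂ h₁₂)
    hsum_le hsum_pos (mul_pos (gd_pos (by omega) hy₁0.le) (pow_pos hy₁0 n)).le) hc

lemma cycleFactor_continuousOn (hd : 1 ≤ d) : ContinuousOn (cycleFactor d n) (Ioi 0) := by
  have hg := (gd_continuousOn (k := n + 2) hd).mono Ioi_subset_Ici_self
  exact (continuousOn_const.mul (hg.mul (continuousOn_pow n))).mul
    (continuousOn_finsetSum _ fun j _ => (hg.div continuousOn_id fun y hy => ne_of_gt hy).pow j)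

lemma lt_mul_pow_of_gd_eq_self {α : ℝ} (hd : (n + 1) ^ (n + 2) < d) (hα : 0 < α)
    (hfix : gd d (n + 2) α = α) : (n : ℝ) < ((d : ℝ) - 1) * α ^ (n + 1) := by
  have hc : ((n : ℝ) + 1) ^ (n + 2) ≤ (d : ℝ) - 1 := by
    have : (((n + 1) ^ (n + 2) + 1 : ℕ) : ℝ) ≤ d := by exact_mod_cast hd
    push_cast at this
    linarith
  have hαfix : α * (1 + ((d : ℝ) - 1) * α ^ (n + 1)) = 1 :=
    (gd_eq_iff (by omega) hα.le).1 hfix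
  have hsmall : α * (n + 1) < 1 := by
    by_contra! h
    have : 1 ≤ ((d : ℝ) - 1) * α ^ (n + 2) :=
      calc (1 : ℝ) ≤ (α * (n + 1)) ^ (n + 2) := one_le_pow₀ h
        _ = ((n : ℝ) + 1) ^ (n + 2) * α ^ (n + 2) := by rw [mul_pow, mul_comm]
        _ ≤ ((d : ℝ) - 1) * α ^ (n + 2) := by gcongr
    have : α + ((d : ℝ) - 1) * α ^ (n + 2) = 1 := by linear_combination hαfix
    linarith
  by_contra! h
  nlinarith [mul_le_mul_of_nonneg_left h hα.le]

lemma exists_cycleFactor_eq_one {α : ℝ} (hd : 1 ≤ d) (hn : n ≠ 0) (hα : 0 < α) (hα1 : α ≤ 1)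
    (hfix : gd d (n + 2) α = α) (hsmall : (n : ℝ) < ((d : ℝ) - 1) * α ^ (n + 1)) :
    ∃ β ∈ Ioo α 1, cycleFactor d n β = 1 := by
  have hψα : 1 < cycleFactor d n α := by
    have : (1 : ℝ) ≤ n := by exact_mod_cast Nat.one_le_iff_ne_zero.2 hn
    rw [cycleFactor_of_gd_eq_self hα.ne' hfix]
    nlinarith
  have hψ1 : cycleFactor d n 1 < 1 := by
    have : (0 : ℝ) < d := by exact_mod_cast (by omega : 0 < d)
    rw [cycleFactor_one hd]
    have := pow_pos (one_div_pos.2 this) n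
    linarith
  obtain ⟨β, hβ, hβ1⟩ := intermediate_value_Icc' hα1
    ((cycleFactor_continuousOn hd).mono fun y hy => hα.trans_le hy.1) ⟨hψ1.le, hψα.le⟩
  refine ⟨β, ⟨hβ.1.lt_of_ne ?_, hβ.2.lt_of_ne ?_⟩, hβ1⟩ <;> rintro rfl <;> linarith

lemma fd_eq_self_iff_of_lt {α β y : ℝ} (hd : 2 ≤ d) (hn : n ≠ 0) (hα : 0 < α)
    (hfix : gd d (n + 2) α = α) (hsmall : (n : ℝ) ≤ ((d : ℝ) - 1) * α ^ (n + 1))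
    (hαβ : α < β) (hβ : cycleFactor d n β = 1) (hy : α < y) :
    fd d (n + 2) y = y ↔ y = β := by
  have hgy : gd d (n + 2) y < y := (gd_lt_of_gd_eq_self hd (by omega) hα.le hfix hy).trans hy
  rw [fd_eq_self_iff_cycleFactor_eq_one (by omega) (hα.trans hy) hgy.ne, ← hβ]
  exact (cycleFactor_strictAntiOn hd hn hα hsmall).injOn.eq_iff hy.le hαβ.le

end

lemma eq_or_eq_or_eq_of_comp_self_eq {g : ℝ → ℝ} {α β x : ℝ} (hg : StrictAntiOn g (Ici 0))
    (hα : 0 ≤ α) (hfix : g α = α) (hβ : ∀ y, α < y → g (g y) = y → y = β) (hx : 0 ≤ x)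
    (hxx : g (g x) = x) : x = g β ∨ x = α ∨ x = β := by
  rcases lt_trichotomy x α with h | h | h
  · have hgx : g x = β := hβ (g x) (hfix ▸ hg hx hα h) (congrArg g hxx)
    exact Or.inl (hgx ▸ hxx.symm)
  · exact Or.inr (Or.inl h)
  · exact Or.inr (Or.inr (hβ x h hxx))

/-- For fixed `k > 2` and all sufficiently large `d`: `x = f_d(x)` has exactly three
solutions `0 < γ < α < β < 1` in `[0,1]`, where `α` is the fixed point of `g_d` in
`(0,1)`; moreover `γ = g_d(β)`. -/
theorem fd_three_solutions (k : ℕ) (hk : 2 < k) :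
    ∃ d₀ : ℕ, ∀ d : ℕ, d₀ ≤ d →
      ∀ α : ℝ, α ∈ Set.Ioo (0 : ℝ) 1 → gd d k α = α →
        ∃ γ β : ℝ, 0 < γ ∧ γ < α ∧ α < β ∧ β < 1 ∧
          fd d k γ = γ ∧ fd d k α = α ∧ fd d k β = β ∧ γ = gd d k β ∧
          ∀ x ∈ Set.Icc (0 : ℝ) 1, fd d k x = x → x = γ ∨ x = α ∨ x = β := by
  obtain ⟨n, rfl⟩ : ∃ n, k = n + 2 := ⟨k - 2, by omega⟩
  have hn : n ≠ 0 := by omega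
  refine ⟨(n + 1) ^ (n + 2) + 1, fun d hd α ⟨hα0, hα1⟩ hfix => ?_⟩
  have hd2 : 2 ≤ d := by
    have : 0 < (n + 1) ^ (n + 2) := by positivity
    omega
  have hsmall := lt_mul_pow_of_gd_eq_self hd hα0 hfix
  obtain ⟨β, ⟨hαβ, hβ1⟩, hβ⟩ := exists_cycleFactor_eq_one (by omega) hn hα0 hα1.le hfix hsmall
  have hfd : ∀ y, α < y → (fd d (n + 2) y = y ↔ y = β) := fun y hy =>
    fd_eq_self_iff_of_lt hd2 hn hα0 hfix hsmall.le hαβ hβ hy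
  have hβfix : fd d (n + 2) β = β := (hfd β hαβ).2 rfl
  refine ⟨gd d (n + 2) β, β, gd_pos (by omega) (hα0.trans hαβ).le,
    gd_lt_of_gd_eq_self hd2 (by omega) hα0.le hfix hαβ, hαβ, hβ1,
    congrArg (gd d (n + 2)) hβfix, by rw [fd, hfix, hfix], hβfix, rfl, fun x hx hxx => ?_⟩
  exact eq_or_eq_or_eq_of_comp_self_eq (gd_strictAntiOn hd2 (by omega)) hα0.le hfix
    (fun y hy => (hfd y hy).1) hx.1 hxx
end

section
/- Let H be a k-uniform hypergraph and v ∈ V(H) with incident edges e₁,…,e_m, where e_i = {v, u_{i,1}, …, u_{i,k−1}}. For a uniformly random matching M of H, P_H(v̄) = (1 + Σ_{i∈[m]} Π_{j∈[k−1]} P_{H − {v, u_{i,1}, …, u_{i,j−1}}}(ū_{i,j}))^{−1}. -/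
open Finset
open scoped Classical

variable {V : Type*}

/-- Degree of a vertex: number of edges containing it. -/
noncomputable def degree (E : Finset (Finset V)) (v : V) : ℕ :=
  (E.filter (fun e => v ∈ e)).card

/-- `E` is `k`-uniform. -/
def Uniform (E : Finset (Finset V)) (k : ℕ) : Prop := ∀ e ∈ E, e.card = k

/-- `E` is linear: two distinct edges share at most one vertex. -/
noncomputable def Linear (E : Finset (Finset V)) : Prop :=
  ∀ e ∈ E, ∀ f ∈ E, e ≠ f → (e ∩ f).card ≤ 1

/-- The set of matchings of `E`: subsets of pairwise disjoint edges. -/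
noncomputable def matchings (E : Finset (Finset V)) : Finset (Finset (Finset V)) :=
  E.powerset.filter (fun M => ∀ e ∈ M, ∀ f ∈ M, e ≠ f → Disjoint e f)

/-- Probability that a uniformly random matching of `E` leaves `v` uncovered. -/
noncomputable def uncovProb (E : Finset (Finset V)) (v : V) : ℝ :=
  (((matchings E).filter (fun M => ∀ e ∈ M, v ∉ e)).card : ℝ) / ((matchings E).card : ℝ)

/-!
Write `N(F)` for the number of matchings of `F`. Then `P_F(w̄) = N(F − w) / N(F)`, so the
chain-rule product along `e_i` telescopes to `N(H − e_i) / N(H − v)`. Matchings containing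
`e_i` correspond to matchings of `H − e_i`, and a matching covering `v` contains exactly one
`e_i`, so `N(H) = N(H − v) + ∑ᵢ N(H − e_i)`; dividing by `N(H − v)` gives the formula.
-/

lemma prod_range_div_eq_of_ne_zero {K : Type*} [CommGroupWithZero K] (g : ℕ → K)
    (hg : ∀ n, g n ≠ 0) (n : ℕ) : ∏ i ∈ range n, g (i + 1) / g i = g n / g 0 :=
  prod_range_induction _ (fun t => g t / g 0) (div_self (hg 0)) n fun t _ => by
    rw [div_mul_div_comm, mul_comm (g t), mul_div_mul_right _ _ (hg t)]

noncomputable def deleteVerts (E : Finset (Finset V)) (S : Finset V) : Finset (Finset V) :=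
  E.filter (fun f => ∀ x ∈ S, x ∉ f)

lemma mem_deleteVerts {E : Finset (Finset V)} {S f : Finset V} :
    f ∈ deleteVerts E S ↔ f ∈ E ∧ Disjoint S f := by
  simp [deleteVerts, disjoint_left]

lemma deleteVerts_empty (E : Finset (Finset V)) : deleteVerts E ∅ = E := by
  simp [deleteVerts]

lemma deleteVerts_deleteVerts (E : Finset (Finset V)) (S T : Finset V) :
    deleteVerts (deleteVerts E S) T = deleteVerts E (T ∪ S) := by
  ext f
  simp only [mem_deleteVerts, disjoint_union_left]
  tauto

lemma mem_matchings {E M : Finset (Finset V)} :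
    M ∈ matchings E ↔ M ⊆ E ∧ (M : Set (Finset V)).Pairwise Disjoint := by
  simp only [matchings, mem_filter, mem_powerset]
  rfl

lemma card_matchings_pos (E : Finset (Finset V)) : 0 < (matchings E).card :=
  card_pos.mpr ⟨∅, by simp [mem_matchings]⟩

lemma filter_uncovered_matchings (E : Finset (Finset V)) (w : V) :
    (matchings E).filter (fun M => ∀ e ∈ M, w ∉ e) = matchings (deleteVerts E {w}) := by
  ext M
  simp only [mem_filter, mem_matchings, subset_iff, mem_deleteVerts, disjoint_singleton_left]
  grind

lemma uncovProb_deleteVerts (E : Finset (Finset V)) (S : Finset V) (w : V) :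
    uncovProb (deleteVerts E S) w =
      (matchings (deleteVerts E (insert w S))).card / (matchings (deleteVerts E S)).card := by
  rw [uncovProb, filter_uncovered_matchings, deleteVerts_deleteVerts, insert_eq]

lemma uncovProb_eq (E : Finset (Finset V)) (w : V) :
    uncovProb E w = (matchings (deleteVerts E {w})).card / (matchings E).card := by
  simpa [deleteVerts_empty] using uncovProb_deleteVerts E ∅ w

section ContainingEdge

variable {E : Finset (Finset V)} {e₀ : Finset V}

lemma erase_mem_matchings_deleteVerts {M : Finset (Finset V)} (hM : M ∈ matchings E)
    (he₀ : e₀ ∈ M) : M.erase e₀ ∈ matchings (deleteVerts E e₀) := by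
  rw [mem_matchings] at hM ⊢
  refine ⟨fun f hf => mem_deleteVerts.mpr ⟨hM.1 (mem_of_mem_erase hf), ?_⟩, ?_⟩
  · exact hM.2 he₀ (mem_of_mem_erase hf) (ne_of_mem_erase hf).symm
  · exact hM.2.mono (by simp)

lemma insert_mem_matchings (he₀ : e₀ ∈ E) {N : Finset (Finset V)}
    (hN : N ∈ matchings (deleteVerts E e₀)) : insert e₀ N ∈ matchings E := by
  rw [mem_matchings] at hN ⊢
  refine ⟨insert_subset he₀ fun f hf => (mem_deleteVerts.mp (hN.1 hf)).1, ?_⟩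
  rw [coe_insert, Set.pairwise_insert_of_symm]
  exact ⟨hN.2, fun f hf _ => (mem_deleteVerts.mp (hN.1 hf)).2⟩

lemma notMem_of_mem_matchings_deleteVerts (hne : e₀.Nonempty) {N : Finset (Finset V)}
    (hN : N ∈ matchings (deleteVerts E e₀)) : e₀ ∉ N := fun h =>
  hne.ne_empty (disjoint_self.mp (mem_deleteVerts.mp ((mem_matchings.mp hN).1 h)).2)

lemma card_matchings_containing (he₀ : e₀ ∈ E) (hne : e₀.Nonempty) :
    ((matchings E).filter (e₀ ∈ ·)).card = (matchings (deleteVerts E e₀)).card := by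
  refine card_nbij' (·.erase e₀) (insert e₀) (fun M hM => ?_) (fun N hN => ?_)
    (fun M hM => ?_) (fun N hN => ?_)
  · rw [mem_coe, mem_filter] at hM
    exact erase_mem_matchings_deleteVerts hM.1 hM.2
  · exact mem_filter.mpr ⟨insert_mem_matchings he₀ hN, mem_insert_self _ _⟩
  · exact insert_erase (mem_filter.mp hM).2
  · exact erase_insert (notMem_of_mem_matchings_deleteVerts hne hN)

end ContainingEdge

/-- A matching either leaves `v` uncovered or contains exactly one edge through `v`. -/
lemma card_matchings_eq_add_sum (E : Finset (Finset V)) (v : V) :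
    (matchings E).card = (matchings (deleteVerts E {v})).card +
      ∑ f ∈ E.filter (v ∈ ·), ((matchings E).filter (f ∈ ·)).card := by
  have hcovered : (matchings E).filter (fun M => ¬ ∀ e ∈ M, v ∉ e) =
      (E.filter (v ∈ ·)).biUnion fun f => (matchings E).filter (f ∈ ·) := by
    ext M
    simp only [mem_filter, mem_biUnion, mem_matchings, not_forall, not_not]
    grind
  have hdisj : ((E.filter (v ∈ ·) : Finset (Finset V)) : Set (Finset V)).PairwiseDisjoint
      fun f => (matchings E).filter (f ∈ ·) := by
    intro f hf g hg hfg
    refine disjoint_filter.mpr fun M hM hfM hgM => ?_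
    have hv : v ∈ f ∩ g := mem_inter.mpr ⟨(mem_filter.mp hf).2, (mem_filter.mp hg).2⟩
    exact not_disjoint_iff_nonempty_inter.mpr ⟨v, hv⟩ ((mem_matchings.mp hM).2 hfM hgM hfg)
  rw [← card_filter_add_card_filter_not (fun M => ∀ e ∈ M, v ∉ e),
    filter_uncovered_matchings, hcovered, card_biUnion hdisj]

theorem uncovProb_eq_inv_one_add_sum (E : Finset (Finset V)) (v : V) :
    uncovProb E v = (1 + ∑ f ∈ E.filter (v ∈ ·),
      ((matchings (deleteVerts E f)).card : ℝ) / (matchings (deleteVerts E {v})).card)⁻¹ := by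
  have hA : ((matchings (deleteVerts E {v})).card : ℝ) ≠ 0 :=
    Nat.cast_ne_zero.mpr (card_matchings_pos _).ne'
  have hsum : ∑ f ∈ E.filter (v ∈ ·), ((matchings E).filter (f ∈ ·)).card =
      ∑ f ∈ E.filter (v ∈ ·), (matchings (deleteVerts E f)).card := by
    refine sum_congr rfl fun f hf => ?_
    obtain ⟨hfE, hvf⟩ := mem_filter.mp hf
    exact card_matchings_containing hfE ⟨v, hvf⟩
  rw [uncovProb_eq, card_matchings_eq_add_sum E v, hsum, ← sum_div]
  push_cast
  field_simp

lemma insert_image_prefix_succ {n : ℕ} (u : Fin n → V) (v : V) (j : Fin n) :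
    insert (u j) (insert v ((univ.filter fun l : Fin n => (l : ℕ) < j).image u)) =
      insert v ((univ.filter fun l : Fin n => (l : ℕ) < j + 1).image u) := by
  have hprefix : (univ.filter fun l : Fin n => (l : ℕ) < j + 1) =
      insert j (univ.filter fun l : Fin n => (l : ℕ) < j) := by
    ext l
    simp only [mem_filter, mem_univ, true_and, mem_insert, Fin.ext_iff]
    omega
  rw [hprefix, image_insert, insert_comm]

lemma prod_uncovProb_deleteVerts_prefix (E : Finset (Finset V)) (v : V) {n : ℕ}
    (u : Fin n → V) :
    ∏ j : Fin n, uncovProb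
        (deleteVerts E (insert v ((univ.filter fun l : Fin n => (l : ℕ) < j).image u))) (u j) =
      ((matchings (deleteVerts E (insert v (univ.image u)))).card : ℝ) /
        (matchings (deleteVerts E {v})).card := by
  set g : ℕ → ℝ := fun t =>
    (matchings (deleteVerts E (insert v ((univ.filter fun l : Fin n => (l : ℕ) < t).image u)))).card
  have hg : ∀ t, g t ≠ 0 := fun t => Nat.cast_ne_zero.mpr (card_matchings_pos _).ne'
  have hfactor : ∀ j : Fin n, uncovProb
      (deleteVerts E (insert v ((univ.filter fun l : Fin n => (l : ℕ) < j).image u))) (u j) =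
        g (j + 1) / g j := fun j => by
    rw [uncovProb_deleteVerts, insert_image_prefix_succ]
  have hlast : g n = (matchings (deleteVerts E (insert v (univ.image u)))).card := by
    simp only [g, filter_true_of_mem fun (l : Fin n) _ => l.is_lt]
  have hfirst : g 0 = (matchings (deleteVerts E {v})).card := by
    simp only [g, filter_false_of_mem fun (l : Fin n) _ => Nat.not_lt_zero l, image_empty,
      insert_empty]
  rw [Fintype.prod_congr _ _ hfactor, Fin.prod_univ_eq_prod_range (fun t => g (t + 1) / g t),
    prod_range_div_eq_of_ne_zero g hg, hlast, hfirst]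

theorem recursive_formula_general (V : Type) (k m : ℕ) (E : Finset (Finset V)) (v : V)
    (e : Fin m → Finset V) (he : ∀ i, e i ∈ E) (hinj : Function.Injective e)
    (hall : ∀ f ∈ E, (v ∈ f ↔ ∃ i, f = e i))
    (u : Fin m → Fin (k - 1) → V)
    (hedge : ∀ i, e i = insert v (Finset.image (u i) Finset.univ)) :
    uncovProb E v =
      (1 + ∑ i : Fin m, ∏ j : Fin (k - 1),
        uncovProb
          (E.filter (fun f => ∀ x ∈ insert v
            ((Finset.univ.filter (fun l : Fin (k - 1) => (l : ℕ) < (j : ℕ))).image (u i)),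
            x ∉ f))
          (u i j))⁻¹ := by
  have hthrough : E.filter (v ∈ ·) = univ.image e := by
    ext f
    simp only [mem_filter, mem_image, mem_univ, true_and]
    constructor
    · rintro ⟨hfE, hvf⟩
      obtain ⟨i, rfl⟩ := (hall f hfE).mp hvf
      exact ⟨i, rfl⟩
    · rintro ⟨i, rfl⟩
      exact ⟨he i, (hall _ (he i)).mpr ⟨i, rfl⟩⟩
  rw [uncovProb_eq_inv_one_add_sum, hthrough, sum_image fun i _ j _ h => hinj h]
  refine congrArg (fun x => (1 + x)⁻¹) (sum_congr rfl fun i _ => ?_)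
  rw [hedge i, ← prod_uncovProb_deleteVerts_prefix]
  -- the filters in the statement carry a classical decidability instance
  congr! 4
  exact (filter_congr_decidable _ _ _).symm

/-- Recursive formula: if `e_1, …, e_m` are the edges through `v`, with
`e_i = {v, u_{i,1}, …, u_{i,k-1}}`, then
`P_H(v̄) = (1 + ∑_i ∏_j P_{H - {v, u_{i,1}, …, u_{i,j-1}}}(ū_{i,j}))⁻¹`. -/
theorem recursive_formula (V : Type) (k m : ℕ) (E : Finset (Finset V)) (v : V)
    (e : Fin m → Finset V) (he : ∀ i, e i ∈ E) (hinj : Function.Injective e)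
    (hall : ∀ f ∈ E, (v ∈ f ↔ ∃ i, f = e i))
    (u : Fin m → Fin (k - 1) → V)
    (huinj : ∀ i, Function.Injective (u i))
    (hvu : ∀ i j, u i j ≠ v)
    (hedge : ∀ i, e i = insert v (Finset.image (u i) Finset.univ)) :
    uncovProb E v =
      (1 + ∑ i : Fin m, ∏ j : Fin (k - 1),
        uncovProb
          (E.filter (fun f => ∀ x ∈ insert v
            ((Finset.univ.filter (fun l : Fin (k - 1) => (l : ℕ) < (j : ℕ))).image (u i)),
            x ∉ f))
          (u i j))⁻¹ :=
  recursive_formula_general V k m E v e he hinj hall u hedge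
end

section
/- Let k > 2 be an integer and ε > 0. There exists d₀ such that for all d ≥ d₀, every d-regular linear k-uniform hypergraph H, and every vertex v of H: 1/(d+1) ≤ P_H(v̄) < 1 − (1−ε)/d^{k−2}, where P_H(v̄) is the probability that a uniformly random matching of H leaves v uncovered. -/
open Finset
open scoped Classical

variable {V : Type*}

/-! Write `a` and `c` for the numbers of matchings avoiding and covering `v`, so that
`P_H(v̄) = a / (a + c)`. Deleting the edge at `v` from a covering matching gives `c ≤ d a`, hence
the lower bound. Conversely, fix an edge `e ∋ v`. A matching `M` avoiding `v` is recovered from the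
matching `{e} ∪ {f ∈ M | f ∩ e = ∅}`, which contains `e`, together with the edges of `M` meeting
`e \ {v}`, for which there are at most `(d + 1) ^ (k - 1)` possibilities. Summing over the `d`
edges at `v` gives `d a ≤ (d + 1) ^ (k - 1) c`, so
`P_H(v̄) ≤ (d + 1) ^ (k - 1) / ((d + 1) ^ (k - 1) + d)`,
which is `1 - (1 + o(1)) / d ^ (k - 2)` because `k ≥ 3`. -/

section Matchings

variable {E M N : Finset (Finset V)} {e f S : Finset V} {u v : V}

lemma mem_matchings_s13 :
    M ∈ matchings E ↔ M ⊆ E ∧ ∀ e ∈ M, ∀ f ∈ M, e ≠ f → Disjoint e f := by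
  simp [matchings]

lemma eq_of_mem_matchings (hM : M ∈ matchings E) (he : e ∈ M) (hf : f ∈ M)
    (hue : u ∈ e) (huf : u ∈ f) : e = f := by
  by_contra hef
  exact disjoint_left.1 ((mem_matchings_s13.1 hM).2 e he f hf hef) hue huf

lemma mem_matchings_of_subset (hM : M ∈ matchings E) (hNM : N ⊆ M) : N ∈ matchings E := by
  rw [mem_matchings_s13] at hM ⊢
  exact ⟨hNM.trans hM.1, fun e he f hf => hM.2 e (hNM he) f (hNM hf)⟩

lemma insert_mem_matchings_s13 (he : e ∈ E) (hM : M ∈ matchings E) (hdisj : ∀ f ∈ M, Disjoint f e) :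
    insert e M ∈ matchings E := by
  rw [mem_matchings_s13] at hM ⊢
  refine ⟨insert_subset he hM.1, ?_⟩
  simp only [mem_insert]
  rintro f (rfl | hf) g (rfl | hg) hfg
  · exact absurd rfl hfg
  · exact (hdisj g hg).symm
  · exact hdisj f hf
  · exact hM.2 f hf g hg hfg

lemma filter_mem_eq_empty_or_singleton (hN : N ∈ matchings E) (u : V) :
    N.filter (u ∈ ·) = ∅ ∨ ∃ f ∈ E.filter (u ∈ ·), N.filter (u ∈ ·) = {f} := by
  rcases (N.filter (u ∈ ·)).eq_empty_or_nonempty with h | ⟨f, hf⟩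
  · exact Or.inl h
  obtain ⟨hfN, huf⟩ := mem_filter.1 hf
  refine Or.inr ⟨f, mem_filter.2 ⟨(mem_matchings_s13.1 hN).1 hfN, huf⟩,
    eq_singleton_iff_unique_mem.2 ⟨hf, fun g hg => ?_⟩⟩
  exact eq_of_mem_matchings hN (mem_filter.1 hg).1 hfN (mem_filter.1 hg).2 huf

noncomputable def matchingsAvoiding (E : Finset (Finset V)) (v : V) : Finset (Finset (Finset V)) :=
  (matchings E).filter (fun M => ∀ e ∈ M, v ∉ e)

noncomputable def matchingsCovering (E : Finset (Finset V)) (v : V) :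
    Finset (Finset (Finset V)) :=
  (matchings E).filter (fun M => ∃ e ∈ M, v ∈ e)

noncomputable def matchingsContaining (E : Finset (Finset V)) (e : Finset V) :
    Finset (Finset (Finset V)) :=
  (matchings E).filter (e ∈ ·)

noncomputable def matchingsMeeting (E : Finset (Finset V)) (S : Finset V) :
    Finset (Finset (Finset V)) :=
  (matchings E).filter (fun N => ∀ f ∈ N, ¬Disjoint f S)

lemma empty_mem_matchingsAvoiding : ∅ ∈ matchingsAvoiding E v := by
  simp [matchingsAvoiding, mem_matchings_s13]

lemma uncovProb_eq_s13 :
    uncovProb E v = #(matchingsAvoiding E v) /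
      (#(matchingsAvoiding E v) + #(matchingsCovering E v) : ℝ) := by
  rw [uncovProb, ← card_filter_add_card_filter_not (s := matchings E) (fun M => ∀ e ∈ M, v ∉ e)]
  simp [matchingsAvoiding, matchingsCovering]

lemma card_matchingsCovering :
    #(matchingsCovering E v) = ∑ e ∈ E.filter (v ∈ ·), #(matchingsContaining E e) := by
  rw [← card_biUnion]
  · congr 1
    ext M
    simp only [matchingsCovering, matchingsContaining, mem_filter, mem_biUnion]
    constructor
    · rintro ⟨hM, e, he, hve⟩
      exact ⟨e, ⟨(mem_matchings_s13.1 hM).1 he, hve⟩, hM, he⟩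
    · rintro ⟨e, ⟨-, hve⟩, hM, he⟩
      exact ⟨hM, e, he, hve⟩
  · intro e he f hf hef
    simp only [Function.onFun, matchingsContaining]
    rw [disjoint_filter]
    intro M hM heM hfM
    exact hef (eq_of_mem_matchings hM heM hfM (mem_filter.1 he).2 (mem_filter.1 hf).2)

lemma card_matchingsContaining_le (hve : v ∈ e) :
    #(matchingsContaining E e) ≤ #(matchingsAvoiding E v) := by
  refine card_le_card_of_injOn (fun M => M.erase e) (fun M hM => ?_)
    (fun M₁ hM₁ M₂ hM₂ => erase_injOn' e (mem_filter.1 hM₁).2 (mem_filter.1 hM₂).2)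
  obtain ⟨hM, heM⟩ := mem_filter.1 hM
  refine mem_filter.2 ⟨mem_matchings_of_subset hM (erase_subset _ _), fun f hf hvf => ?_⟩
  exact (mem_erase.1 hf).1 (eq_of_mem_matchings hM (mem_erase.1 hf).2 heM hvf hve)

lemma card_matchingsCovering_le :
    #(matchingsCovering E v) ≤ degree E v * #(matchingsAvoiding E v) := by
  rw [card_matchingsCovering, degree, ← smul_eq_mul, ← sum_const]
  exact sum_le_sum fun e he => card_matchingsContaining_le (mem_filter.1 he).2

lemma biUnion_filter_mem_eq (hN : ∀ f ∈ N, ¬Disjoint f S) :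
    S.biUnion (fun u => N.filter (u ∈ ·)) = N := by
  ext f
  simp only [mem_biUnion, mem_filter]
  refine ⟨fun ⟨_, _, hf, _⟩ => hf, fun hf => ?_⟩
  obtain ⟨u, huf, huS⟩ := not_disjoint_iff.1 (hN f hf)
  exact ⟨u, huS, hf, huf⟩

/-- A matching whose edges all meet `S` is determined by choosing, for each `u ∈ S`, either no
edge or one of the `degree E u` edges through `u`. -/
lemma card_matchingsMeeting_le :
    #(matchingsMeeting E S) ≤ ∏ u ∈ S, (degree E u + 1) := by
  calc #(matchingsMeeting E S)
      ≤ #(S.pi fun u => insert ∅ ((E.filter (u ∈ ·)).image singleton)) := by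
        refine card_le_card_of_injOn (fun N u _ => N.filter (u ∈ ·)) (fun N hN => ?_)
          (fun N₁ hN₁ N₂ hN₂ h => ?_)
        · refine mem_pi.2 fun u _ => ?_
          show N.filter (u ∈ ·) ∈ _
          rcases filter_mem_eq_empty_or_singleton (mem_filter.1 hN).1 u with h | ⟨f, hf, h⟩
          · rw [h]
            exact mem_insert_self _ _
          · rw [h]
            exact mem_insert_of_mem (mem_image_of_mem _ hf)
        · rw [← biUnion_filter_mem_eq (mem_filter.1 hN₁).2,
            ← biUnion_filter_mem_eq (mem_filter.1 hN₂).2]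
          exact biUnion_congr rfl fun u hu => congrFun (congrFun h u) hu
    _ ≤ ∏ u ∈ S, (degree E u + 1) := by
        rw [card_pi]
        gcongr with u
        exact (card_insert_le _ _).trans (Nat.add_le_add_right card_image_le 1)

lemma card_matchingsAvoiding_le (he : e ∈ E) (hve : v ∈ e) :
    #(matchingsAvoiding E v) ≤
      #(matchingsContaining E e) * #(matchingsMeeting E (e.erase v)) := by
  rw [← card_product]
  refine card_le_card_of_injOn
    (fun M => (insert e (M.filter (Disjoint · e)), M.filter (¬Disjoint · e)))
    (fun M hM => ?_) (fun M₁ _ M₂ _ h => ?_)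
  · obtain ⟨hM, hv⟩ := mem_filter.1 hM
    simp only [mem_coe, mem_product, matchingsContaining, matchingsMeeting, mem_filter]
    refine ⟨⟨insert_mem_matchings_s13 he (mem_matchings_of_subset hM (filter_subset _ _))
      (fun f hf => (mem_filter.1 hf).2), mem_insert_self _ _⟩,
      mem_matchings_of_subset hM (filter_subset _ _), fun f hf => ?_⟩
    obtain ⟨hfM, hfe⟩ := hf
    obtain ⟨w, hwf, hwe⟩ := not_disjoint_iff.1 hfe
    exact not_disjoint_iff.2 ⟨w, hwf, mem_erase.2 ⟨fun hwv => hv f hfM (hwv ▸ hwf), hwe⟩⟩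
  · simp only [Prod.mk.injEq] at h
    have he_notMem : ∀ M : Finset (Finset V), e ∉ M.filter (Disjoint · e) := fun M hM =>
      disjoint_left.1 (mem_filter.1 hM).2 hve hve
    rw [← filter_union_filter_not_eq (Disjoint · e) M₁,
      ← filter_union_filter_not_eq (Disjoint · e) M₂,
      ← erase_insert (he_notMem M₁), h.1, erase_insert (he_notMem M₂), h.2]

lemma degree_mul_card_matchingsAvoiding_le {k D : ℕ} (hE : Uniform E k)
    (hD : ∀ u, degree E u ≤ D) :
    degree E v * #(matchingsAvoiding E v) ≤ (D + 1) ^ (k - 1) * #(matchingsCovering E v) := by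
  rw [card_matchingsCovering, mul_sum, degree, ← smul_eq_mul, ← sum_const]
  refine sum_le_sum fun e he => ?_
  obtain ⟨heE, hve⟩ := mem_filter.1 he
  calc #(matchingsAvoiding E v)
      ≤ #(matchingsContaining E e) * #(matchingsMeeting E (e.erase v)) :=
        card_matchingsAvoiding_le heE hve
    _ ≤ #(matchingsContaining E e) * (D + 1) ^ (k - 1) := by
        gcongr
        calc #(matchingsMeeting E (e.erase v)) ≤ ∏ u ∈ e.erase v, (degree E u + 1) :=
              card_matchingsMeeting_le
          _ ≤ (D + 1) ^ (k - 1) := by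
              rw [← hE e heE, ← card_erase_of_mem hve]
              exact prod_le_pow_card _ _ _ fun u _ => Nat.add_le_add_right (hD u) 1
    _ = (D + 1) ^ (k - 1) * #(matchingsContaining E e) := mul_comm _ _

end Matchings

open Filter Topology

lemma eventually_one_sub_mul_lt {k : ℕ} (hk : 2 < k) {ε : ℝ} (hε : 0 < ε) :
    ∀ᶠ d : ℕ in atTop, (1 - ε) * (((d : ℝ) + 1) ^ (k - 1) + d) < d * (d : ℝ) ^ (k - 2) := by
  obtain ⟨m, rfl⟩ : ∃ m, k = m + 3 := ⟨k - 3, by omega⟩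
  have hinv : Tendsto (fun d : ℕ => (d : ℝ)⁻¹) atTop (𝓝 0) :=
    tendsto_inv_atTop_zero.comp tendsto_natCast_atTop_atTop
  have hratio : Tendsto (fun d : ℕ => (1 - ε) * ((1 + (d : ℝ)⁻¹) ^ (m + 2) + (d : ℝ)⁻¹ ^ (m + 1)))
      atTop (𝓝 (1 - ε)) := by
    simpa using ((((tendsto_const_nhds (x := (1 : ℝ))).add hinv).pow (m + 2)).add
      (hinv.pow (m + 1))).const_mul (1 - ε)
  filter_upwards [hratio.eventually (gt_mem_nhds (by linarith : 1 - ε < 1)),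
    eventually_gt_atTop 0] with d hd hd0
  have hd0 : (0 : ℝ) < d := by exact_mod_cast hd0
  have hinv_mul : (d : ℝ)⁻¹ * d = 1 := inv_mul_cancel₀ hd0.ne'
  have hscale : (1 - ε) * (((d : ℝ) + 1) ^ (m + 2) + d) =
      (1 - ε) * ((1 + (d : ℝ)⁻¹) ^ (m + 2) + (d : ℝ)⁻¹ ^ (m + 1)) * (d * (d : ℝ) ^ (m + 1)) :=
    calc (1 - ε) * (((d : ℝ) + 1) ^ (m + 2) + d)
        = (1 - ε) * (((1 + (d : ℝ)⁻¹) * d) ^ (m + 2) + d * ((d : ℝ)⁻¹ * d) ^ (m + 1)) := by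
          rw [add_mul, one_mul, hinv_mul, one_pow, mul_one]
      _ = _ := by rw [mul_pow, mul_pow]; ring
  simp only [show m + 3 - 1 = m + 2 by omega, show m + 3 - 2 = m + 1 by omega, hscale]
  exact mul_lt_of_lt_one_left (by positivity) hd

lemma one_div_add_one_le_div {a c d : ℝ} (ha : 0 < a) (hc : 0 ≤ c) (hd : 0 ≤ d)
    (hca : c ≤ d * a) : 1 / (d + 1) ≤ a / (a + c) := by
  rw [div_le_div_iff₀ (by linarith) (by linarith)]
  linarith

lemma div_add_lt_one_sub_div {a c d p q δ : ℝ} (ha : 0 < a) (hc : 0 ≤ c) (hd : 0 < d)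
    (hq : 0 < q) (hac : d * a ≤ p * c) (hδ : δ * (p + d) < d * q) :
    a / (a + c) < 1 - δ / q := by
  have hc : 0 < c := hc.lt_of_ne <| by
    rintro rfl
    nlinarith
  have hac' : a / (a + c) = 1 - c / (a + c) := by field_simp; ring
  rw [hac', sub_lt_sub_iff_left, div_lt_div_iff₀ hq (by linarith)]
  rcases le_or_gt δ 0 with hδ0 | hδ0
  · nlinarith
  · refine lt_of_mul_lt_mul_left ?_ hd.le
    nlinarith [mul_le_mul_of_nonneg_left hac hδ0.le, mul_lt_mul_of_pos_right hδ hc]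

/-- For `k > 2` and `ε > 0`, for all sufficiently large `d`, every vertex `v` of a
`d`-regular linear `k`-uniform hypergraph satisfies
`1/(d+1) ≤ P_H(v̄) < 1 - (1-ε)/d^(k-2)`. -/
theorem uncovProb_sharp_range (k : ℕ) (hk : 2 < k) (ε : ℝ) (hε : 0 < ε) :
    ∃ d₀ : ℕ, ∀ d : ℕ, d₀ ≤ d →
      ∀ (V : Type) [Finite V], ∀ E : Finset (Finset V),
        Uniform E k → Linear E → (∀ w : V, degree E w = d) →
        ∀ v : V,
          1 / ((d : ℝ) + 1) ≤ uncovProb E v ∧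
          uncovProb E v < 1 - (1 - ε) / (d : ℝ) ^ (k - 2) := by
  obtain ⟨d₀, hd₀⟩ :=
    eventually_atTop.1 ((eventually_one_sub_mul_lt hk hε).and (eventually_gt_atTop 0))
  refine ⟨d₀, fun d hd V _ E hE _ hreg v => ?_⟩
  obtain ⟨hlarge, hd⟩ := hd₀ d hd
  have hcov : (#(matchingsCovering E v) : ℝ) ≤ d * #(matchingsAvoiding E v) := by
    exact_mod_cast hreg v ▸ card_matchingsCovering_le
  have havoid : (d : ℝ) * #(matchingsAvoiding E v) ≤
      ((d : ℝ) + 1) ^ (k - 1) * #(matchingsCovering E v) := by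
    exact_mod_cast hreg v ▸ degree_mul_card_matchingsAvoiding_le hE fun u => (hreg u).le
  have ha : (0 : ℝ) < #(matchingsAvoiding E v) := by
    exact_mod_cast card_pos.2 ⟨∅, empty_mem_matchingsAvoiding⟩
  rw [uncovProb_eq_s13]
  exact ⟨one_div_add_one_le_div ha (by positivity) (by positivity) hcov,
    div_add_lt_one_sub_div ha (by positivity) (by exact_mod_cast hd) (by positivity) havoid hlarge⟩
end
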